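/- arXiv:0912.3925 — 4 statements merged into one kernel-verified Lean document; each statement's English description precedes it below -/
import Mathlib

section
/- Let A, B, C be n×n matrices over ℤ (or any nontrivial integral domain) with AB ≠ C, and let r be chosen uniformly at random from {0,1}^n. Then the probability that ABr = Cr is at most 1/2. -/
theorem freivalds_half {n : ℕ} (hn : 1 ≤ n)
    (A B C : Matrix (Fin n) (Fin n) ℤ) (h : A * B ≠ C) :
    ((Finset.univ.filter (fun r : Fin n → Bool =>
        (A * B).mulVec (fun i => if r i then 1 else 0) =
          C.mulVec (fun i => if r i then 1 else 0))).card : ℚ) / 2 ^ n ≤ 1 / 2 := by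
  classical
  set D := A * B - C with hDdef
  have hD : D ≠ 0 := sub_ne_zero.mpr h
  obtain ⟨i, j, hij⟩ : ∃ i j, D i j ≠ 0 := by
    by_contra hc
    push_neg at hc
    exact hD (by ext i j; simpa using hc i j)
  set vec : (Fin n → Bool) → (Fin n → ℤ) := fun r k => if r k then 1 else 0 with hvec
  have key : ∀ r : Fin n → Bool,
      ((A * B).mulVec (vec r) = C.mulVec (vec r)) ↔ D.mulVec (vec r) = 0 := by
    intro r
    rw [hDdef, Matrix.sub_mulVec, sub_eq_zero]
  set f : (Fin n → Bool) → (Fin n → Bool) := fun r => Function.update r j (!r j) with hf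
  have hvecf : ∀ r, vec (f r) = vec r + (if r j then (-1 : ℤ) else 1) • Pi.single j 1 := by
    intro r
    funext k
    by_cases hk : k = j
    · subst hk
      simp only [hvec, hf, Function.update_self, Pi.add_apply, Pi.smul_apply,
        Pi.single_eq_same, smul_eq_mul, mul_one]
      cases hr : r k <;> simp
    · simp only [hvec, hf, Function.update_of_ne hk, Pi.add_apply, Pi.smul_apply]
      split <;> simp [Pi.single_eq_of_ne hk]
  have hsingle : (D.mulVec (Pi.single j 1)) i = D i j := by
    simp [Matrix.mulVec, dotProduct, Pi.single_apply]
  set S := Finset.univ.filter (fun r : Fin n → Bool =>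
      (A * B).mulVec (vec r) = C.mulVec (vec r)) with hS
  have hmap : ∀ r ∈ S, f r ∈ Sᶜ := by
    intro r hr
    simp only [hS, Finset.mem_filter, Finset.mem_univ, true_and] at hr
    simp only [Finset.mem_compl, hS, Finset.mem_filter, Finset.mem_univ, true_and]
    rw [key] at hr ⊢
    intro hcon
    have : D.mulVec (vec (f r)) i = (if r j then (-1 : ℤ) else 1) * D i j := by
      rw [hvecf r, Matrix.mulVec_add, Matrix.mulVec_smul, hr]
      simp only [Pi.add_apply, Pi.zero_apply, zero_add, Pi.smul_apply, smul_eq_mul]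
      rw [hsingle]
    rw [hcon] at this
    have : (if r j then (-1 : ℤ) else 1) * D i j ≠ 0 := by
      apply mul_ne_zero _ hij
      split <;> norm_num
    simp_all
  have hinj : Set.InjOn f S := by
    intro a _ b _ hab
    have h2 : f (f a) = f (f b) := by rw [hab]
    have hff : ∀ r, f (f r) = r := by
      intro r
      funext k
      by_cases hk : k = j
      · subst hk; simp [hf]
      · simp [hf, Function.update_of_ne hk]
    rwa [hff, hff] at h2
  have hcard : S.card ≤ Sᶜ.card := Finset.card_le_card_of_injOn f hmap hinj
  have hcompl : Sᶜ.card = 2 ^ n - S.card := by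
    rw [Finset.card_compl]
    congr 1
    simp [Finset.card_univ]
  have hle : 2 * S.card ≤ 2 ^ n := by
    have hSle : S.card ≤ 2 ^ n := by
      have := Finset.card_le_univ S
      simpa [Finset.card_univ] using this
    omega
  have h2 : (S.card : ℚ) / 2 ^ n ≤ 1 / 2 := by
    rw [div_le_div_iff₀ (by positivity) (by norm_num)]
    have : ((2 * S.card : ℕ) : ℚ) ≤ ((2 ^ n : ℕ) : ℚ) := Nat.cast_le.mpr hle
    push_cast at this
    linarith
  exact h2
end

section
/- Let D be a nonzero n×n matrix over ℤ. Among all 2^n vectors r ∈ {0,1}^n, at most 2^{n−1} satisfy Dr = 0. -/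
theorem freivalds_count {n : ℕ} (hn : 1 ≤ n)
    (D : Matrix (Fin n) (Fin n) ℤ) (hD : D ≠ 0) :
    (Finset.univ.filter (fun r : Fin n → Bool =>
        D.mulVec (fun i => if r i then 1 else 0) = 0)).card ≤ 2 ^ (n - 1) := by
  obtain ⟨i, j, hij⟩ : ∃ i j, D i j ≠ 0 := by
    by_contra h
    push_neg at h
    exact hD (by ext i j; exact h i j)
  set S := Finset.univ.filter (fun r : Fin n → Bool =>
      D.mulVec (fun i => if r i then 1 else 0) = 0) with hS
  have key : ∀ r ∈ S, Function.update r j (!r j) ∉ S := by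
    intro r hr hr'
    simp only [hS, Finset.mem_filter] at hr hr'
    have h1 := congrFun hr.2 i
    have h2 := congrFun hr'.2 i
    simp only [Matrix.mulVec, dotProduct, Pi.zero_apply] at h1 h2
    have e : (∑ k, D i k * (if r k then (1:ℤ) else 0)) -
        (∑ k, D i k * (if Function.update r j (!r j) k then (1:ℤ) else 0))
        = D i j * ((if r j then (1:ℤ) else 0) - (if !r j then 1 else 0)) := by
      rw [← Finset.sum_sub_distrib, Finset.sum_eq_single j]
      · rw [Function.update_self]; ring
      · intro k _ hk
        rw [Function.update_of_ne hk]; ring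
      · intro h; exact absurd (Finset.mem_univ j) h
    rw [h1, h2, sub_zero] at e
    cases hrj : r j <;> simp [hrj] at e <;> omega
  have hinj : Set.InjOn (fun r : Fin n → Bool => Function.update r j (!r j)) ↑S := by
    intro a _ b _ hab
    have := congrFun hab
    funext k
    rcases eq_or_ne k j with rfl | hk
    · have := this k
      simp only [Function.update_self] at this
      exact Bool.not_inj this
    · have := this k
      simpa [Function.update_of_ne hk] using this
  have hmaps : ∀ r ∈ S, Function.update r j (!r j) ∈ Finset.univ \ S := by
    intro r hr
    simp only [Finset.mem_sdiff, Finset.mem_univ, true_and]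
    exact key r hr
  have hle : S.card ≤ (Finset.univ \ S).card :=
    Finset.card_le_card_of_injOn _ hmaps hinj
  have hcard : (Finset.univ \ S).card = 2 ^ n - S.card := by
    rw [Finset.card_sdiff_of_subset (Finset.subset_univ S)]
    simp [Finset.card_univ]
  have h2n : 2 ^ n = 2 ^ (n - 1) * 2 := by
    rw [← pow_succ, Nat.sub_add_cancel hn]
  have hSle : S.card ≤ 2 ^ n := by
    calc S.card ≤ Finset.univ.card := Finset.card_le_card (Finset.subset_univ S)
    _ = 2 ^ n := by simp [Finset.card_univ]
  omega
end

section
/- Let A, B, C be n×n matrices over ℤ with AB ≠ C, and let r¹, …, r^k be independent uniform random vectors in {0,1}^n. The probability that ABr^t = Cr^t holds for all t = 1, …, k is at most (1/2)^k. -/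
lemma freivalds_key {n : ℕ} (D : Matrix (Fin n) (Fin n) ℤ) (hD : D ≠ 0) :
    2 * (Finset.univ.filter (fun r : Fin n → Bool =>
      D.mulVec (fun i => if r i then 1 else 0) = 0)).card ≤ 2 ^ n := by
  obtain ⟨i, j, hij⟩ : ∃ i j, D i j ≠ 0 := by
    by_contra hc
    push_neg at hc
    exact hD (by ext i j; simpa using hc i j)
  set S := Finset.univ.filter (fun r : Fin n → Bool =>
      D.mulVec (fun i => if r i then 1 else 0) = 0) with hS
  set f : (Fin n → Bool) → (Fin n → Bool) := fun r => Function.update r j (!r j) with hf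
  have hfinj : Function.Injective f := by
    intro a b hab
    funext x
    by_cases hx : x = j
    · subst hx
      have := congrFun hab x
      simp [hf, Function.update_self] at this
      simpa using this
    · have := congrFun hab x
      simpa [hf, Function.update_of_ne hx] using this
  have hdisj : Disjoint S (S.image f) := by
    rw [Finset.disjoint_left]
    rintro r hr hr'
    simp only [Finset.mem_image] at hr'
    obtain ⟨s, hs, rfl⟩ := hr'
    simp only [hS, Finset.mem_filter, Finset.mem_univ, true_and] at hr hs
    have h1 := congrFun hr i
    have h2 := congrFun hs i
    simp only [Matrix.mulVec, dotProduct, Pi.zero_apply] at h1 h2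
    have key : ∑ x, (D i x * (if f s x then 1 else 0) - D i x * (if s x then 1 else 0)) = 0 := by
      rw [Finset.sum_sub_distrib, h1, h2, sub_zero]
    rw [Finset.sum_eq_single j (fun x _ hx => by
        simp [hf, Function.update_of_ne hx]) (by simp)] at key
    simp only [hf, Function.update_self] at key
    cases hsj : s j <;> simp [hsj] at key <;> exact hij key
  have hcards : S.card + S.card ≤ 2 ^ n := by
    have := Finset.card_union_of_disjoint hdisj
    have hsub : (S ∪ S.image f).card ≤ (Finset.univ : Finset (Fin n → Bool)).card :=
      Finset.card_le_card (Finset.subset_univ _)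
    rw [this, Finset.card_image_of_injective _ hfinj] at hsub
    simpa [Finset.card_univ] using hsub
  omega

theorem freivalds_iterated {n k : ℕ} (hn : 1 ≤ n) (hk : 1 ≤ k)
    (A B C : Matrix (Fin n) (Fin n) ℤ) (h : A * B ≠ C) :
    ((Finset.univ.filter (fun r : Fin k → Fin n → Bool =>
        ∀ t : Fin k,
          (A * B).mulVec (fun i => if r t i then 1 else 0) =
            C.mulVec (fun i => if r t i then 1 else 0))).card : ℚ) /
        (2 ^ n) ^ k ≤ (1 / 2) ^ k := by
  set D := A * B - C with hD
  have hDne : D ≠ 0 := sub_ne_zero_of_ne h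
  set S := Finset.univ.filter (fun r : Fin n → Bool =>
      D.mulVec (fun i => if r i then 1 else 0) = 0) with hS
  have hpeq : ∀ r : Fin n → Bool,
      ((A * B).mulVec (fun i => if r i then 1 else 0) =
        C.mulVec (fun i => if r i then 1 else 0)) ↔
        D.mulVec (fun i => if r i then 1 else 0) = 0 := by
    intro r
    simp only [hD, Matrix.sub_mulVec, sub_eq_zero]
  have hkey : 2 * S.card ≤ 2 ^ n := freivalds_key D hDne
  have hfilter : (Finset.univ.filter (fun r : Fin k → Fin n → Bool =>
        ∀ t : Fin k,
          (A * B).mulVec (fun i => if r t i then 1 else 0) =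
            C.mulVec (fun i => if r t i then 1 else 0))) =
      Fintype.piFinset (fun _ : Fin k => S) := by
    ext r
    simp only [Finset.mem_filter, Finset.mem_univ, true_and, Fintype.mem_piFinset, hS]
    exact forall_congr' fun t => by simpa using hpeq (r t)
  rw [hfilter, Fintype.card_piFinset]
  simp only [Finset.prod_const, Finset.card_univ, Fintype.card_fin]
  rw [Nat.cast_pow, ← div_pow]
  apply pow_le_pow_left₀ (by positivity)
  rw [div_le_div_iff₀ (by positivity) (by norm_num)]
  have h2 : (2 * S.card : ℚ) ≤ 2 ^ n := by exact_mod_cast hkey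
  linarith
end

section
/- Let A, B, C be n×n matrices over a field K with AB ≠ C. Let r have i.i.d. coordinates drawn from a finitely supported distribution f on K with max point mass p (i.e., f(v) ≤ p for all v). Then P[ABr = Cr] ≤ p. -/
open Finset

lemma tsum_pi_prod_aux {K : Type*} (f : K → ENNReal) :
    ∀ (ι : Type) [Fintype ι] [DecidableEq ι],
      ∑' s : ι → K, ∏ i, f (s i) = (∑' v, f v) ^ Fintype.card ι := by
  intro ι _ _
  obtain ⟨m, hn⟩ : ∃ m, Fintype.card ι = m := ⟨_, rfl⟩
  induction m generalizing ι with
  | zero =>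
    have : IsEmpty ι := Fintype.card_eq_zero_iff.mp hn
    have hu : Unique (ι → K) :=
      ⟨⟨fun i => (this.false i).elim⟩, fun a => funext fun i => (this.false i).elim⟩
    rw [tsum_eq_single (hu.default) (fun b hb => (hb (hu.uniq b)).elim)]
    simp [hn]
  | succ m ih =>
    obtain ⟨i0⟩ : Nonempty ι := Fintype.card_pos_iff.mp (hn ▸ m.succ_pos)
    have hcard : Fintype.card {k : ι // k ≠ i0} = m := by
      rw [Fintype.card_subtype_compl]
      simp [hn]
    rw [← (Equiv.funSplitAt i0 K).symm.tsum_eq, ENNReal.tsum_prod']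
    have hterm : ∀ (x : K) (s : {k : ι // k ≠ i0} → K),
        (∏ i, f ((Equiv.funSplitAt i0 K).symm (x, s) i))
          = f x * ∏ k : {k : ι // k ≠ i0}, f (s k) := by
      intro x s
      rw [← Finset.mul_prod_erase univ _ (mem_univ i0)]
      have hprod : ∏ k ∈ univ.erase i0, f ((Equiv.funSplitAt i0 K).symm (x, s) k)
          = ∏ k : {k : ι // k ≠ i0}, f ((Equiv.funSplitAt i0 K).symm (x, s) (k : ι)) :=
        Finset.prod_subtype _ (fun k => by simp) _
      rw [hprod]
      congr 1
      · simp [Equiv.funSplitAt, Equiv.piSplitAt]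
      · exact Finset.prod_congr rfl fun k _ => by
          simp [Equiv.funSplitAt, Equiv.piSplitAt, k.2]
    calc ∑' (x : K) (s : {k : ι // k ≠ i0} → K),
            ∏ i, f ((Equiv.funSplitAt i0 K).symm (x, s) i)
        = ∑' (x : K), f x * ((∑' v, f v) ^ m) := by
          apply tsum_congr; intro x
          simp_rw [hterm x]
          rw [ENNReal.tsum_mul_left, ih _ hcard, hcard]
      _ = (∑' v, f v) ^ Fintype.card ι := by
          rw [ENNReal.tsum_mul_right, hn, pow_succ, mul_comm]

theorem freivalds_general {n : ℕ} {K : Type*} [Field K] [DecidableEq K]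
    (A B C : Matrix (Fin n) (Fin n) K) (h : A * B ≠ C)
    (f : K → ENNReal) (hfin : (Function.support f).Finite)
    (hsum : ∑' v : K, f v = 1) (p : ENNReal) (hp : ∀ v : K, f v ≤ p) :
    ∑' r : Fin n → K,
        (if (A * B).mulVec r = C.mulVec r then ∏ j : Fin n, f (r j) else 0) ≤ p := by
  classical
  set D := A * B - C with hDdef
  have hD : D ≠ 0 := sub_ne_zero.mpr h
  obtain ⟨i, j, hij⟩ : ∃ i j, D i j ≠ 0 := by
    by_contra hc
    push_neg at hc
    exact hD (by ext a b; simpa using hc a b)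
  set g : ({k : Fin n // k ≠ j} → K) → K :=
    fun s => -(∑ k : {k : Fin n // k ≠ j}, D i k * s k) / (D i j) with hg
  have key : ∀ r : Fin n → K, (A * B).mulVec r = C.mulVec r →
      r j = g (fun k => r k) := by
    intro r hr
    have h0 : D.mulVec r i = 0 := by
      rw [hDdef, Matrix.sub_mulVec, hr]; simp
    have h1 : ∑ k, D i k * r k = 0 := by
      simpa [Matrix.mulVec, dotProduct] using h0
    have h2 := Finset.add_sum_erase univ (fun k => D i k * r k) (mem_univ j)
    rw [h1] at h2
    have h3 : ∑ k ∈ univ.erase j, D i k * r k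
        = ∑ k : {k : Fin n // k ≠ j}, D i k * r k :=
      Finset.sum_subtype _ (fun k => by simp) _
    rw [hg, eq_div_iff hij]
    linear_combination h2 - h3
  have step1 : ∑' r : Fin n → K,
        (if (A * B).mulVec r = C.mulVec r then ∏ j : Fin n, f (r j) else 0)
      ≤ ∑' r : Fin n → K,
        (if r j = g (fun k => r k) then ∏ j : Fin n, f (r j) else 0) := by
    apply ENNReal.tsum_le_tsum
    intro r
    split_ifs with h1 h2
    · exact le_refl _
    · exact absurd (key r h1) h2
    · exact zero_le
    · exact le_refl _
  refine step1.trans ?_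
  rw [← (Equiv.funSplitAt j K).symm.tsum_eq, ENNReal.tsum_prod', ENNReal.tsum_comm]
  have hcoord0 : ∀ (x : K) (s : {k : Fin n // k ≠ j} → K),
      (Equiv.funSplitAt j K).symm (x, s) j = x := by
    intro x s; simp [Equiv.funSplitAt, Equiv.piSplitAt]
  have hcoord : ∀ (x : K) (s : {k : Fin n // k ≠ j} → K) (k : {k : Fin n // k ≠ j}),
      (Equiv.funSplitAt j K).symm (x, s) k = s k := by
    intro x s k; simp [Equiv.funSplitAt, Equiv.piSplitAt, k.2]
  have inner : ∀ s : {k : Fin n // k ≠ j} → K,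
      ∑' x : K, (if (Equiv.funSplitAt j K).symm (x, s) j
            = g (fun k => (Equiv.funSplitAt j K).symm (x, s) k)
          then ∏ k : Fin n, f ((Equiv.funSplitAt j K).symm (x, s) k) else 0)
      = f (g s) * ∏ k : {k : Fin n // k ≠ j}, f (s k) := by
    intro s
    have hfun : ∀ x : K, (if (Equiv.funSplitAt j K).symm (x, s) j
            = g (fun k => (Equiv.funSplitAt j K).symm (x, s) k)
          then ∏ k : Fin n, f ((Equiv.funSplitAt j K).symm (x, s) k) else 0)
        = (if x = g s then f (g s) * ∏ k : {k : Fin n // k ≠ j}, f (s k) else 0) := by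
      intro x
      have hgs : g (fun k => (Equiv.funSplitAt j K).symm (x, s) k) = g s := by
        congr 1; funext k; exact hcoord x s k
      rw [hcoord0, hgs]
      split_ifs with hx
      · rw [← hx, ← Finset.mul_prod_erase univ _ (mem_univ j), hcoord0]
        congr 1
        have hprod : ∏ k ∈ univ.erase j, f ((Equiv.funSplitAt j K).symm (x, s) k)
            = ∏ k : {k : Fin n // k ≠ j},
                f ((Equiv.funSplitAt j K).symm (x, s) (k : Fin n)) :=
          Finset.prod_subtype _ (fun k => by simp) _
        rw [hprod]
        exact Finset.prod_congr rfl fun k _ => by rw [hcoord x s k]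
      · rfl
    simp_rw [hfun]
    exact tsum_ite_eq (g s) _
  calc ∑' (s : {k : Fin n // k ≠ j} → K) (x : K),
        (if (Equiv.funSplitAt j K).symm (x, s) j
            = g (fun k => (Equiv.funSplitAt j K).symm (x, s) k)
          then ∏ k : Fin n, f ((Equiv.funSplitAt j K).symm (x, s) k) else 0)
      = ∑' s : {k : Fin n // k ≠ j} → K,
          f (g s) * ∏ k : {k : Fin n // k ≠ j}, f (s k) := tsum_congr inner
    _ ≤ ∑' s : {k : Fin n // k ≠ j} → K,
          p * ∏ k : {k : Fin n // k ≠ j}, f (s k) :=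
        ENNReal.tsum_le_tsum fun s => mul_le_mul_left (hp _) _
    _ = p * ∑' s : {k : Fin n // k ≠ j} → K, ∏ k, f (s k) := ENNReal.tsum_mul_left
    _ = p := by
        rw [tsum_pi_prod_aux f {k : Fin n // k ≠ j}, hsum, one_pow, mul_one]
end
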